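/- Let G be a group, let m ≥ 1, and let B = [b_{i,j}] be an m×m matrix with entries in the group algebra ℂ[G] (finitely supported functions G → ℂ) which is lower triangular (b_{i,j} = 0 whenever j > i) and such that each diagonal entry b_{i,i} is either 0 or the indicator function δ_{g_i} of a single group element g_i ∈ G of infinite order. Then the operator I − R_B on (ℓ²(G))ᵐ is injective, where R_B denotes right-multiplication by B; that is, if ξ = (ξ₁, …, ξ_m) ∈ (ℓ²(G))ᵐ satisfies Σ_{i=1}^{m} ξ_i · b_{i,j} = ξ_j for all 1 ≤ j ≤ m, then ξ = 0. -/
import Mathlib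


/-- Right convolution of `ξ ∈ ℓ²(G)` with a finitely supported `a : G → ℂ`:
`(ξ · a)(h) = Σ_{g ∈ supp a} a g * ξ (h g⁻¹)`. -/
noncomputable def rconv {G : Type*} [Group G] (ξ : lp (fun _ : G => ℂ) 2)
    (a : G →₀ ℂ) : G → ℂ :=
  fun h => ∑ g ∈ a.support, a g * (ξ : ∀ _ : G, ℂ) (h * g⁻¹)

lemma pow_inj_of_inf_order {G : Type*} [Group G] {g : G}
    (hg : ∀ k : ℕ, 0 < k → g ^ k ≠ 1) {a b : ℕ} (h : g ^ a = g ^ b) : a = b := by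
  by_contra hne
  rcases Nat.lt_or_ge a b with hlt | hge
  · have hb : g ^ (b - a) * g ^ a = g ^ b := by rw [← pow_add]; congr 1; omega
    rw [← h] at hb
    have : g ^ (b - a) = 1 := mul_right_cancel (hb.trans (one_mul (g ^ a)).symm)
    exact hg (b - a) (by omega) this
  · have hlt : b < a := by omega
    have hb : g ^ (a - b) * g ^ b = g ^ a := by rw [← pow_add]; congr 1; omega
    rw [h] at hb
    have : g ^ (a - b) = 1 := mul_right_cancel (hb.trans (one_mul (g ^ b)).symm)
    exact hg (a - b) (by omega) this

lemma zero_of_shift_invariant {G : Type*} [Group G] (ξ : lp (fun _ : G => ℂ) 2)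
    {g : G} (hg : ∀ k : ℕ, 0 < k → g ^ k ≠ 1)
    (hshift : ∀ x : G, (ξ : ∀ _ : G, ℂ) (x * g⁻¹) = (ξ : ∀ _ : G, ℂ) x) :
    ξ = 0 := by
  have hsum : Summable fun h => ‖(ξ : ∀ _ : G, ℂ) h‖ ^ (2:ℝ) := by
    have h := (lp.memℓp ξ).summable (p := 2) (by norm_num)
    simpa using h
  have key : ∀ x : G, (ξ : ∀ _ : G, ℂ) x = 0 := by
    intro x
    have horb : ∀ k : ℕ, (ξ : ∀ _ : G, ℂ) (x * (g⁻¹) ^ k) = (ξ : ∀ _ : G, ℂ) x := by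
      intro k
      induction k with
      | zero => simp
      | succ n ih =>
        have : x * g⁻¹ ^ (n + 1) = (x * g⁻¹ ^ n) * g⁻¹ := by
          rw [pow_succ, mul_assoc]
        rw [this, hshift, ih]
    have hinj : Function.Injective (fun k : ℕ => x * (g⁻¹) ^ k) := by
      intro a b hab
      have h1 : (g⁻¹) ^ a = (g⁻¹) ^ b := mul_left_cancel hab
      have h2 : g ^ a = g ^ b := by
        have := congrArg (fun y => y⁻¹) h1
        simpa [inv_pow] using this
      exact pow_inj_of_inf_order hg h2
    have hcomp : Summable ((fun h => ‖(ξ : ∀ _ : G, ℂ) h‖ ^ (2:ℝ)) ∘ (fun k : ℕ => x * (g⁻¹) ^ k)) :=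
      hsum.comp_injective hinj
    have hconst : ((fun h => ‖(ξ : ∀ _ : G, ℂ) h‖ ^ (2:ℝ)) ∘ (fun k : ℕ => x * (g⁻¹) ^ k))
        = fun _ : ℕ => ‖(ξ : ∀ _ : G, ℂ) x‖ ^ (2:ℝ) := by
      funext k
      simp only [Function.comp]
      rw [horb k]
    rw [hconst, summable_const_iff] at hcomp
    have hx : ‖(ξ : ∀ _ : G, ℂ) x‖ = 0 :=
      (Real.rpow_eq_zero (norm_nonneg _) (by norm_num)).mp hcomp
    exact norm_eq_zero.mp hx
  ext x
  simpa using key x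

theorem eq_zero_of_fixed_by_lower_triangular {G : Type*} [Group G] {m : ℕ}
    (hm : 1 ≤ m) (B : Matrix (Fin m) (Fin m) (G →₀ ℂ))
    (hlower : ∀ i j : Fin m, i < j → B i j = 0)
    (hdiag : ∀ i : Fin m, B i i = 0 ∨
      ∃ g : G, (∀ k : ℕ, 0 < k → g ^ k ≠ 1) ∧ B i i = Finsupp.single g 1)
    (ξ : Fin m → lp (fun _ : G => ℂ) 2)
    (hfix : ∀ (j : Fin m) (x : G),
      ∑ i : Fin m, rconv (ξ i) (B i j) x = (ξ j : ∀ _ : G, ℂ) x) :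
    ξ = 0 := by
  have main : ∀ (n : ℕ) (j : Fin m), m - (j : ℕ) ≤ n → ξ j = 0 := by
    intro n
    induction n with
    | zero => intro j hj; exact absurd hj (by have := j.isLt; omega)
    | succ n ih =>
      intro j hj
      have hup : ∀ i : Fin m, j < i → ξ i = 0 := by
        intro i hi
        exact ih i (by have := (Fin.lt_iff_val_lt_val).mp hi; omega)
      have hdiagEq : ∀ x : G, rconv (ξ j) (B j j) x = (ξ j : ∀ _ : G, ℂ) x := by
        intro x
        rw [← hfix j x]
        have hsingle : ∑ i : Fin m, rconv (ξ i) (B i j) x = rconv (ξ j) (B j j) x := by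
          refine Finset.sum_eq_single_of_mem j (Finset.mem_univ j) ?_
          intro i _ hij
          rcases lt_or_gt_of_ne hij with h | h
          · rw [hlower i j h]; simp [rconv]
          · rw [hup i h]; simp [rconv]
        rw [hsingle]
      rcases hdiag j with h0 | ⟨g, hg, hB⟩
      · ext x
        have hx := hdiagEq x
        rw [h0] at hx
        simp only [rconv, Finsupp.support_zero, Finset.sum_empty] at hx
        simpa using hx.symm
      · apply zero_of_shift_invariant (ξ j) hg
        intro x
        have hx := hdiagEq x
        rw [hB] at hx
        rwa [rconv, Finsupp.support_single_ne_zero g one_ne_zero,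
          Finset.sum_singleton, Finsupp.single_eq_same, one_mul] at hx
  funext j
  exact main m j (by omega)
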